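/- Let E0 > 0. For γ ≥ 0 set ε(γ) = (−(E0+4) + √((E0+4)² + 4γ²))/2, E1(γ) = E0 + ε(γ), a(γ) = 4 + E0 + ε(γ), and define h_γ(τ) = (1 + a(γ)τ)²·(1 + E1(γ)τ) / (τ·(1 + (a(γ)+ε(γ))τ)) for τ > 0. Then for each γ ≥ 0 the function h_γ attains a global minimum on (0, ∞); moreover, if γ_n → 0⁺ and τ_n is any minimizer of h_{γ_n}, then τ_n → 1/√(E0(E0+4)) and min_{τ>0} h_{γ_n}(τ) → 2(2 + E0 + √(E0(E0+4))). -/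

import Mathlib

open Filter

/-- The unique positive root of `ε² + (E0+4)ε - γ² = 0` (equal to `0` at `γ = 0`). -/
noncomputable def epsPar (E0 γ : ℝ) : ℝ :=
  (-(E0 + 4) + Real.sqrt ((E0 + 4)^2 + 4 * γ^2)) / 2

/-- `E1 = E0 + ε`. -/
noncomputable def E1Par (E0 γ : ℝ) : ℝ := E0 + epsPar E0 γ

/-- `a = 4 + E0 + ε`. -/
noncomputable def aPar (E0 γ : ℝ) : ℝ := 4 + E0 + epsPar E0 γ

/-- `h_γ(τ) = (1 + aτ)²(1 + E1τ)/(τ(1 + (a+ε)τ))`. -/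
noncomputable def hfun (E0 γ τ : ℝ) : ℝ :=
  (1 + aPar E0 γ * τ)^2 * (1 + E1Par E0 γ * τ) /
    (τ * (1 + (aPar E0 γ + epsPar E0 γ) * τ))

/-!
With `p = 1 + (E0+4)τ`, `q = 1 + E0 τ` and `ε = ε(γ) ≥ 0`, the cross-multiplied difference
`τ(p + ετ)²(q + ετ) - pqτ(p + 2ετ) = ετ²(p² + 2pετ + qετ + ε²τ²)` is nonnegative, so
`h_γ ≥ h_0 = pq/τ`. With `s = √(E0(E0+4))` one has `h_0(τ) - 2(2 + E0 + s) = (1 - sτ)²/τ`.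
Hence every `h_γ` blows up at `0` and at `∞` and has a minimum; the minimum values are squeezed
between `2(2 + E0 + s)` and `h_γ(1/s) → h_0(1/s) = 2(2 + E0 + s)`, and the minimizers satisfy
`(1 - sτ)² ≤ τ (min h_γ - 2(2 + E0 + s)) → 0`.
-/

open Set Topology

theorem exists_forall_le_of_tendsto_atTop_Ioi {f : ℝ → ℝ} (hf : ContinuousOn f (Ioi 0))
    (h₀ : Tendsto f (𝓝[>] 0) atTop) (h_inf : Tendsto f atTop atTop) :
    ∃ τ > (0 : ℝ), ∀ τ' > (0 : ℝ), f τ ≤ f τ' := by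
  have hcont : Continuous (f ∘ Real.exp) :=
    hf.comp_continuous Real.continuous_exp fun x => Real.exp_pos x
  have hlim : Tendsto (f ∘ Real.exp) (cocompact ℝ) atTop := by
    rw [cocompact_eq_atBot_atTop]
    exact tendsto_sup.2 ⟨h₀.comp Real.tendsto_exp_atBot_nhdsGT, h_inf.comp Real.tendsto_exp_atTop⟩
  obtain ⟨x, hx⟩ := hcont.exists_forall_le hlim
  refine ⟨Real.exp x, Real.exp_pos x, fun τ' hτ' => ?_⟩
  simpa [Real.exp_log hτ'] using hx (Real.log τ')

theorem tendsto_one_of_sq_one_sub_le {ι : Type*} {l : Filter ι} {x u : ι → ℝ}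
    (hx : ∀ i, 0 < x i) (hu : Tendsto u l (𝓝 0)) (h : ∀ i, (1 - x i) ^ 2 ≤ x i * u i) :
    Tendsto x l (𝓝 1) := by
  have hx_le : ∀ᶠ i in l, x i ≤ 3 := (hu.eventually_le_const one_pos).mono fun i hi => by
    nlinarith [h i, hx i, mul_le_mul_of_nonneg_left hi (hx i).le]
  have hsq : Tendsto (fun i => (x i - 1) ^ 2) l (𝓝 0) := by
    refine squeeze_zero' (.of_forall fun i => sq_nonneg _) (hx_le.mono fun i hi => ?_)
      (by simpa using hu.const_mul 3)
    have hu_nonneg : 0 ≤ u i := nonneg_of_mul_nonneg_right ((sq_nonneg _).trans (h i)) (hx i)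
    nlinarith [h i, mul_le_mul_of_nonneg_right hi hu_nonneg]
  rw [tendsto_iff_norm_sub_tendsto_zero]
  simpa [Real.sqrt_sq_eq_abs] using hsq.sqrt

theorem epsPar_nonneg (E0 γ : ℝ) : 0 ≤ epsPar E0 γ := by
  have : E0 + 4 ≤ Real.sqrt ((E0 + 4) ^ 2 + 4 * γ ^ 2) :=
    (le_abs_self _).trans (Real.abs_le_sqrt (le_add_of_nonneg_right (by positivity)))
  unfold epsPar
  linarith

theorem epsPar_zero {E0 : ℝ} (hE0 : 0 ≤ E0 + 4) : epsPar E0 0 = 0 := by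
  simp [epsPar, Real.sqrt_sq hE0]

@[fun_prop]
theorem continuous_epsPar (E0 : ℝ) : Continuous (epsPar E0) := by
  unfold epsPar
  fun_prop

noncomputable def hZero (E0 τ : ℝ) : ℝ := (1 + (E0 + 4) * τ) * (1 + E0 * τ) / τ

theorem hZero_eq_of_ne_zero (E0 : ℝ) {τ : ℝ} (hτ : τ ≠ 0) :
    hZero E0 τ = τ⁻¹ + (2 * E0 + 4) + E0 * (E0 + 4) * τ := by
  unfold hZero
  field_simp
  ring

theorem hZero_sub_eq {E0 τ : ℝ} (hE0 : 0 ≤ E0 * (E0 + 4)) (hτ : τ ≠ 0) :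
    hZero E0 τ - 2 * (2 + E0 + Real.sqrt (E0 * (E0 + 4))) =
      (1 - Real.sqrt (E0 * (E0 + 4)) * τ) ^ 2 / τ := by
  have hs := Real.sq_sqrt hE0
  rw [hZero_eq_of_ne_zero E0 hτ]
  field_simp
  linear_combination -τ ^ 2 * hs

theorem hfun_zero {E0 τ : ℝ} (hE0 : 0 ≤ E0 + 4) (hτ : 0 < τ) : hfun E0 0 τ = hZero E0 τ := by
  have : 0 < 1 + (E0 + 4) * τ := by positivity
  simp only [hfun, hZero, aPar, E1Par, epsPar_zero hE0, add_zero]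
  rw [div_eq_div_iff (mul_pos hτ (by linarith)).ne' hτ.ne']
  ring

theorem hZero_le_hfun {E0 : ℝ} (hE0 : 0 ≤ E0) (γ : ℝ) {τ : ℝ} (hτ : 0 < τ) :
    hZero E0 τ ≤ hfun E0 γ τ := by
  have he := epsPar_nonneg E0 γ
  set e := epsPar E0 γ
  set p := 1 + (E0 + 4) * τ
  set q := 1 + E0 * τ
  have hp : 0 ≤ p := by positivity
  have hq : 0 ≤ q := by positivity
  have hfun_eq : hfun E0 γ τ = (p + e * τ) ^ 2 * (q + e * τ) / (τ * (p + 2 * e * τ)) := by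
    simp only [hfun, aPar, E1Par, p, q, e]
    ring_nf
  rw [hfun_eq, hZero, div_le_div_iff₀ hτ (by positivity)]
  nlinarith [show 0 ≤ e * τ * (p ^ 2 + 2 * p * e * τ + q * e * τ + e ^ 2 * τ ^ 2) by positivity]

theorem le_hZero {E0 τ : ℝ} (hE0 : 0 ≤ E0) (hτ : 0 < τ) :
    2 * (2 + E0 + Real.sqrt (E0 * (E0 + 4))) ≤ hZero E0 τ := by
  have := hZero_sub_eq (by positivity) hτ.ne'
  have : 0 ≤ (1 - Real.sqrt (E0 * (E0 + 4)) * τ) ^ 2 / τ := by positivity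
  linarith

theorem hZero_inv_sqrt {E0 : ℝ} (hE0 : 0 < E0) :
    hZero E0 (1 / Real.sqrt (E0 * (E0 + 4))) = 2 * (2 + E0 + Real.sqrt (E0 * (E0 + 4))) := by
  have hs : 0 < Real.sqrt (E0 * (E0 + 4)) := by positivity
  have := hZero_sub_eq (by positivity) (one_div_pos.2 hs).ne'
  rw [mul_one_div_cancel hs.ne', sub_self, zero_pow two_ne_zero, zero_div] at this
  linarith

theorem sq_one_sub_sqrt_mul_le {E0 τ : ℝ} (hE0 : 0 ≤ E0) (γ : ℝ) (hτ : 0 < τ) :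
    (1 - Real.sqrt (E0 * (E0 + 4)) * τ) ^ 2 ≤
      τ * (hfun E0 γ τ - 2 * (2 + E0 + Real.sqrt (E0 * (E0 + 4)))) := by
  have h := hZero_sub_eq (by positivity) hτ.ne'
  rw [eq_div_iff hτ.ne'] at h
  nlinarith [hZero_le_hfun hE0 γ hτ]

theorem hfun_denom_pos {E0 : ℝ} (hE0 : 0 ≤ E0 + 4) (γ : ℝ) {τ : ℝ} (hτ : 0 < τ) :
    0 < τ * (1 + (aPar E0 γ + epsPar E0 γ) * τ) := by
  have := epsPar_nonneg E0 γ
  have : 0 ≤ aPar E0 γ + epsPar E0 γ := by unfold aPar; linarith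
  positivity

theorem continuousOn_hfun {E0 : ℝ} (hE0 : 0 ≤ E0 + 4) (γ : ℝ) : ContinuousOn (hfun E0 γ) (Ioi 0) :=
  ContinuousOn.div (by fun_prop) (by fun_prop) fun _ hτ => (hfun_denom_pos hE0 γ hτ).ne'

theorem tendsto_hfun_nhds_zero {E0 τ : ℝ} (hE0 : 0 ≤ E0 + 4) (hτ : 0 < τ) :
    Tendsto (fun γ => hfun E0 γ τ) (𝓝 0) (𝓝 (hZero E0 τ)) := by
  rw [← hfun_zero hE0 hτ]
  refine ContinuousAt.tendsto ?_
  unfold hfun aPar E1Par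
  exact ContinuousAt.div (by fun_prop) (by fun_prop) (hfun_denom_pos hE0 0 hτ).ne'

theorem tendsto_hfun_nhdsGT_zero {E0 : ℝ} (hE0 : 0 ≤ E0) (γ : ℝ) :
    Tendsto (hfun E0 γ) (𝓝[>] 0) atTop := by
  refine tendsto_atTop_mono' _ ?_ tendsto_inv_nhdsGT_zero
  filter_upwards [self_mem_nhdsWithin] with τ (hτ : 0 < τ)
  refine le_trans ?_ (hZero_le_hfun hE0 γ hτ)
  rw [hZero_eq_of_ne_zero E0 hτ.ne']
  nlinarith [mul_nonneg (mul_nonneg hE0 (by linarith : (0 : ℝ) ≤ E0 + 4)) hτ.le]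

theorem tendsto_hfun_atTop {E0 : ℝ} (hE0 : 0 < E0) (γ : ℝ) : Tendsto (hfun E0 γ) atTop atTop := by
  refine tendsto_atTop_mono' _ ?_ (tendsto_id.const_mul_atTop (by positivity : 0 < E0 * (E0 + 4)))
  filter_upwards [eventually_gt_atTop 0] with τ hτ
  refine le_trans ?_ (hZero_le_hfun hE0.le γ hτ)
  rw [hZero_eq_of_ne_zero E0 hτ.ne']
  have := inv_pos.2 hτ
  simp only [id]
  linarith

/-- each `h_γ` attains a global minimum on `(0, ∞)`; as `γ → 0⁺`,
any minimizers converge to `1/√(E0(E0+4))` and the minimum values converge to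
`2(2 + E0 + √(E0(E0+4)))`. -/
theorem hfun_min_asymptotics (E0 : ℝ) (hE0 : 0 < E0) :
    (∀ γ : ℝ, 0 ≤ γ → ∃ τ > (0 : ℝ), ∀ τ' > (0 : ℝ), hfun E0 γ τ ≤ hfun E0 γ τ') ∧
    (∀ γ τm : ℕ → ℝ, (∀ n, 0 < γ n) → Tendsto γ atTop (nhds 0) →
      (∀ n, 0 < τm n) →
      (∀ n, ∀ τ > (0 : ℝ), hfun E0 (γ n) (τm n) ≤ hfun E0 (γ n) τ) →
      Tendsto τm atTop (nhds (1 / Real.sqrt (E0 * (E0 + 4)))) ∧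
      Tendsto (fun n => hfun E0 (γ n) (τm n)) atTop
        (nhds (2 * (2 + E0 + Real.sqrt (E0 * (E0 + 4)))))) := by
  have hE0' : 0 ≤ E0 + 4 := by linarith
  refine ⟨fun γ _ => exists_forall_le_of_tendsto_atTop_Ioi (continuousOn_hfun hE0' γ)
    (tendsto_hfun_nhdsGT_zero hE0.le γ) (tendsto_hfun_atTop hE0 γ), ?_⟩
  intro γ τm _ hγ hτm hmin
  set s := Real.sqrt (E0 * (E0 + 4))
  have hs : 0 < s := by positivity
  set M := 2 * (2 + E0 + s)
  have hval : Tendsto (fun n => hfun E0 (γ n) (τm n)) atTop (𝓝 M) := by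
    have hup := (tendsto_hfun_nhds_zero hE0' (one_div_pos.2 hs)).comp hγ
    rw [hZero_inv_sqrt hE0] at hup
    exact tendsto_of_tendsto_of_tendsto_of_le_of_le tendsto_const_nhds hup
      (fun n => (le_hZero hE0.le (hτm n)).trans (hZero_le_hfun hE0.le _ (hτm n)))
      (fun n => hmin n _ (one_div_pos.2 hs))
  refine ⟨?_, hval⟩
  have hsτ : Tendsto (fun n => s * τm n) atTop (𝓝 1) := by
    refine tendsto_one_of_sq_one_sub_le (u := fun n => (hfun E0 (γ n) (τm n) - M) / s)
      (fun n => mul_pos hs (hτm n)) (by simpa using (hval.sub_const M).div_const s) fun n => ?_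
    rw [mul_div_assoc', mul_assoc, mul_div_cancel_left₀ _ hs.ne']
    exact sq_one_sub_sqrt_mul_le hE0.le _ (hτm n)
  simpa [mul_div_cancel_left₀ _ hs.ne'] using hsτ.div_const s
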